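/- As f → 0, the effective drag coefficient satisfies ζ(f) = a₀·(1 + f·(1/2 − a₁/a₀)) + O(f²); that is, ζ(f) − a₀ − f·(a₀/2 − a₁) is O(f²) near f = 0 (with ζ extended by continuity to ζ(0) = M₀(0) = a₀). -/

import Mathlib

/-!
Expanding the integrand of `w0` to first order in `f` gives `M0 φ f = M0 φ 0 - f a₁ + O(f²)`,
uniformly because `φ` is bounded on `[0, 2]`; periodicity factors `M0 φ 0` into `a₀`.
With `1 - e^{-f} = f - f²/2 + O(f³)`, the numerator `f M0 φ f - (a₀ + f c)(1 - e^{-f})` is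
`O(f³)` exactly when `c = a₀/2 - a₁`, and dividing by `1 - e^{-f} ≍ f` leaves `O(f²)`.
-/

open MeasureTheory intervalIntegral Asymptotics Filter

noncomputable def w0 (φ : ℝ → ℝ) (f x : ℝ) : ℝ :=
  ∫ s in (0:ℝ)..1, Real.exp (φ (x + s) - φ x - f * s)

noncomputable def M0 (φ : ℝ → ℝ) (f : ℝ) : ℝ := ∫ x in (0:ℝ)..1, w0 φ f x

noncomputable def w1 (φ : ℝ → ℝ) (f x : ℝ) : ℝ :=
  ∫ s in (0:ℝ)..1, (w0 φ f (x + s)) ^ 2 * Real.exp (φ (x + s) - φ x - f * s)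

noncomputable def M1 (φ : ℝ → ℝ) (f : ℝ) : ℝ := ∫ x in (0:ℝ)..1, w1 φ f x

open Real Set Topology

theorem one_sub_exp_neg_sub_isBigO :
    (fun f => 1 - exp (-f) - (f - f ^ 2 / 2)) =O[𝓝 0] (· ^ 3) := by
  have h := (Real.exp_sub_sum_range_isBigO_pow 3).comp_tendsto
    (continuous_neg.tendsto' (0 : ℝ) 0 neg_zero)
  refine (h.neg_left.trans (isBigO_of_le _ fun f => ?_)).congr_left fun f => ?_
  · simp [norm_pow]
  · simp only [Function.comp_apply, Finset.sum_range_succ, Finset.sum_range_zero]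
    push_cast [Nat.factorial]
    ring

theorem one_sub_exp_neg_isEquivalent : (fun f => 1 - exp (-f)) ~[𝓝 0] id := by
  have h : (fun f => (1 - exp (-f)) - f) =O[𝓝 0] (· ^ 2) :=
    (one_sub_exp_neg_sub_isBigO.trans (isLittleO_pow_pow (by norm_num : 2 < 3)).isBigO).sub
      (isBigO_const_mul_self (1 / 2) _ _) |>.congr_left fun f => by ring
  exact h.trans_isLittleO (isLittleO_pow_id (by norm_num))

theorem abs_integral_exp_sub_mul_sub_le {g : ℝ → ℝ} (hg : Continuous g) {D : ℝ}
    (hD : ∀ s ∈ Icc (0 : ℝ) 1, g s ≤ D) {f : ℝ} (hf : |f| ≤ 1) :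
    |(∫ s in (0 : ℝ)..1, exp (g s - f * s)) - (∫ s in (0 : ℝ)..1, exp (g s))
      + f * ∫ s in (0 : ℝ)..1, exp (g s) * s| ≤ exp D * f ^ 2 := by
  have hsplit : (∫ s in (0 : ℝ)..1, exp (g s - f * s)) - (∫ s in (0 : ℝ)..1, exp (g s))
      + f * (∫ s in (0 : ℝ)..1, exp (g s) * s)
      = ∫ s in (0 : ℝ)..1, exp (g s) * (exp (-(f * s)) - 1 - -(f * s)) := by
    rw [← intervalIntegral.integral_const_mul, ← intervalIntegral.integral_sub,
      ← intervalIntegral.integral_add]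
    · refine intervalIntegral.integral_congr fun s _ => ?_
      simp only [sub_eq_add_neg (g s), exp_add]
      ring
    all_goals exact Continuous.intervalIntegrable (by fun_prop) _ _
  rw [hsplit, ← Real.norm_eq_abs]
  calc _ ≤ exp D * f ^ 2 * |(1 : ℝ) - 0| :=
        intervalIntegral.norm_integral_le_of_norm_le_const fun s hs => ?_
    _ = exp D * f ^ 2 := by simp
  rw [uIoc_of_le zero_le_one] at hs
  have hfs : |-(f * s)| ≤ 1 := by
    rw [abs_neg, abs_mul, abs_of_pos hs.1]
    exact mul_le_one₀ hf hs.1.le hs.2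
  rw [norm_mul, norm_of_nonneg (exp_pos _).le]
  gcongr
  · exact hD s (Ioc_subset_Icc_self hs)
  · refine (abs_exp_sub_one_sub_id_le hfs).trans ?_
    rw [neg_sq, mul_pow]
    exact mul_le_of_le_one_right (sq_nonneg f) (pow_le_one₀ hs.1.le hs.2)

@[fun_prop]
theorem continuous_w0 {φ : ℝ → ℝ} (hφ : Continuous φ) (f : ℝ) : Continuous (w0 φ f) := by
  unfold w0; fun_prop

theorem M0_sub_M0_zero_add_isBigO {φ : ℝ → ℝ} (hφ : Continuous φ) :
    (fun f => M0 φ f - M0 φ 0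
      + f * ∫ x in (0 : ℝ)..1, ∫ s in (0 : ℝ)..1, exp (φ (x + s) - φ x) * s)
      =O[𝓝 0] (· ^ 2) := by
  obtain ⟨C, hC⟩ := (isCompact_Icc (a := (0 : ℝ)) (b := 2)).exists_bound_of_continuousOn
    hφ.continuousOn
  refine isBigO_iff.2 ⟨exp (2 * C), ?_⟩
  filter_upwards [Icc_mem_nhds (neg_lt_zero.2 one_pos) one_pos] with f hf
  have hw0 : ∀ x ∈ Icc (0 : ℝ) 1, |w0 φ f x - w0 φ 0 x
      + f * ∫ s in (0 : ℝ)..1, exp (φ (x + s) - φ x) * s| ≤ exp (2 * C) * f ^ 2 := by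
    intro x hx
    have hosc : ∀ s ∈ Icc (0 : ℝ) 1, φ (x + s) - φ x ≤ 2 * C := fun s hs => by
      have hxs := hC (x + s) ⟨by linarith [hx.1, hs.1], by linarith [hx.2, hs.2]⟩
      have hx' := hC x ⟨hx.1, by linarith [hx.2]⟩
      rw [Real.norm_eq_abs] at hxs hx'
      linarith [le_abs_self (φ (x + s)), neg_abs_le (φ x)]
    simpa [w0] using abs_integral_exp_sub_mul_sub_le (g := fun s => φ (x + s) - φ x)
      (by fun_prop) hosc (abs_le.2 hf)
  have hsplit : M0 φ f - M0 φ 0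
      + f * ∫ x in (0 : ℝ)..1, ∫ s in (0 : ℝ)..1, exp (φ (x + s) - φ x) * s
      = ∫ x in (0 : ℝ)..1, (w0 φ f x - w0 φ 0 x
          + f * ∫ s in (0 : ℝ)..1, exp (φ (x + s) - φ x) * s) := by
    unfold M0
    rw [← intervalIntegral.integral_const_mul, ← intervalIntegral.integral_sub,
      ← intervalIntegral.integral_add]
    all_goals apply Continuous.intervalIntegrable; fun_prop
  rw [hsplit, norm_of_nonneg (sq_nonneg f)]
  calc _ ≤ exp (2 * C) * f ^ 2 * |(1 : ℝ) - 0| :=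
        intervalIntegral.norm_integral_le_of_norm_le_const fun x hx =>
          hw0 x (Ioc_subset_Icc_self (by rwa [uIoc_of_le zero_le_one] at hx))
    _ = exp (2 * C) * f ^ 2 := by simp

theorem M0_zero_eq {φ : ℝ → ℝ} (hφ : Function.Periodic φ 1) :
    M0 φ 0 = (∫ x in (0 : ℝ)..1, exp (-φ x)) * ∫ s in (0 : ℝ)..1, exp (φ s) := by
  have hw0 : ∀ x, w0 φ 0 x = exp (-φ x) * ∫ s in (0 : ℝ)..1, exp (φ s) := by
    intro x
    have hshift : ∫ s in (0 : ℝ)..1, exp (φ (x + s)) = ∫ s in (0 : ℝ)..1, exp (φ s) := by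
      rw [intervalIntegral.integral_comp_add_left (fun u => exp (φ u)) x]
      simpa using (hφ.comp exp).intervalIntegral_add_eq x 0
    rw [← hshift, ← intervalIntegral.integral_const_mul]
    refine intervalIntegral.integral_congr fun s _ => ?_
    rw [← exp_add]
    ring_nf
  simp only [M0, hw0, intervalIntegral.integral_mul_const]

theorem mul_div_one_sub_exp_neg_sub_isBigO {m : ℝ → ℝ} {a b : ℝ}
    (hm : (fun f => m f - a + f * b) =O[𝓝 0] (· ^ 2)) :
    (fun f => f * m f / (1 - exp (-f)) - a - f * (a / 2 - b)) =O[𝓝[≠] 0] (· ^ 2) := by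
  set c := a / 2 - b
  have hnum : (fun f => f * m f - (a + f * c) * (1 - exp (-f))) =O[𝓝 0] (· ^ 3) := by
    have h1 : (fun f => f * (m f - a + f * b)) =O[𝓝 0] (· ^ 3) :=
      ((isBigO_refl (fun f => f) _).mul hm).congr_right fun f => by ring
    have h2 : (fun f => (a + f * c) * (1 - exp (-f) - (f - f ^ 2 / 2))) =O[𝓝 0] (· ^ 3) :=
      ((((continuous_const.add (continuous_id.mul continuous_const)).tendsto 0).isBigO_one ℝ).mul
        one_sub_exp_neg_sub_isBigO).congr_right fun f => one_mul _
    exact ((h1.add (isBigO_const_mul_self (c / 2) _ _)).sub h2).congr_left fun f => by ring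
  have hden : (fun f => (1 - exp (-f))⁻¹) =O[𝓝 0] (fun f => f⁻¹) :=
    one_sub_exp_neg_isEquivalent.isBigO_symm.inv_rev
      (Eventually.of_forall fun f (hf : f = 0) => by simp [hf])
  refine ((hnum.mul hden).mono nhdsWithin_le_nhds).congr' ?_ ?_
  · filter_upwards [self_mem_nhdsWithin] with f hf
    have : 1 - exp (-f) ≠ 0 := sub_ne_zero.2 fun h => hf (by simpa using h.symm)
    field_simp
    ring
  · filter_upwards [self_mem_nhdsWithin] with f hf
    field_simp

theorem Asymptotics.IsBigO.of_nhdsNE {α E F : Type*} [TopologicalSpace α]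
    [NormedAddCommGroup E] [NormedAddCommGroup F] {u : α → E} {v : α → F} {x : α}
    (h : u =O[𝓝[≠] x] v) (hx : u x = 0) : u =O[𝓝 x] v := by
  rw [← nhdsNE_sup_pure]
  exact h.sup (isBigO_pure.2 fun _ => hx)

/-- As `f → 0`, the effective drag coefficient
`ζ(f) = f·M₀(f)/(1 − e^{−f})` (extended by `ζ(0) = M₀(0) = a₀`) satisfies
`ζ(f) = a₀·(1 + f·(1/2 − a₁/a₀)) + O(f²)`. -/
theorem stmt_8 (φ : ℝ → ℝ) (hφc : Continuous φ) (hφper : ∀ x, φ (x + 1) = φ x)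
    (a0 a1 : ℝ)
    (ha0 : a0 = (∫ x in (0:ℝ)..1, Real.exp (-φ x)) * ∫ s in (0:ℝ)..1, Real.exp (φ s))
    (ha1 : a1 = ∫ x in (0:ℝ)..1, ∫ s in (0:ℝ)..1, Real.exp (φ (x + s) - φ x) * s)
    (ζ : ℝ → ℝ) (hζ : ∀ f, f ≠ 0 → ζ f = f * M0 φ f / (1 - Real.exp (-f)))
    (hζ0 : ζ 0 = M0 φ 0) :
    (fun f => ζ f - a0 - f * (a0 / 2 - a1)) =O[nhds 0] (fun f => f ^ 2) := by
  have hM0 : M0 φ 0 = a0 := by rw [M0_zero_eq hφper, ha0]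
  have hexpand := M0_sub_M0_zero_add_isBigO hφc
  rw [hM0, ← ha1] at hexpand
  refine IsBigO.of_nhdsNE ?_ (by simp [hζ0, hM0])
  refine (mul_div_one_sub_exp_neg_sub_isBigO hexpand).congr' ?_ EventuallyEq.rfl
  filter_upwards [self_mem_nhdsWithin] with f hf
  rw [hζ f hf]
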